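/- arXiv:1210.3142 — 4 statements merged into one kernel-verified Lean document; each statement's English description precedes it below -/
import Mathlib

section
/- If I ≠ ∅, the minimizer of G(x) := max{M(x;Ω_i), D(x;Θ_j) : i ∈ I, j ∈ J} over ℝⁿ is unique. -/
/-!
`M(x;Ω_i) = ‖x - a_i‖ + r_i` and `D(x;Θ_j) = max (‖x - b_j‖ - s_j) 0`, so `G` is a finite maximum
of such terms. Suppose `x₁ ≠ x₂` both attain the minimum `V`. The triangle inequality through
any centre `a_i` gives `‖x₁ - x₂‖ ≤ 2V`, so `V > 0`. Both points lie in every closed ball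
`B(a_i; V - r_i)` and `B(b_j; V + s_j)`, so by strict convexity their midpoint lies in the open
balls, and every term of `G` is `< V` there: a contradiction.
-/

open Metric

section Balls

variable {E : Type*} [NormedAddCommGroup E] [NormedSpace ℝ E]

theorem exists_norm_eq_one_and_eq_norm_smul [Nontrivial E] (v : E) :
    ∃ u : E, ‖u‖ = 1 ∧ v = ‖v‖ • u := by
  by_cases hv : v = 0
  · obtain ⟨u, hu⟩ := exists_norm_eq E zero_le_one
    exact ⟨u, hu, by simp [hv]⟩
  · exact ⟨‖v‖⁻¹ • v, norm_smul_inv_norm hv, by rw [smul_inv_smul₀ (norm_ne_zero_iff.2 hv)]⟩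

theorem sSup_norm_sub_closedBall [Nontrivial E] (x c : E) {R : ℝ} (hR : 0 ≤ R) :
    sSup {d : ℝ | ∃ q ∈ closedBall c R, d = ‖x - q‖} = dist x c + R := by
  refine IsGreatest.csSup_eq ⟨?_, ?_⟩
  · -- the farthest point of the ball lies opposite to `x`
    obtain ⟨u, hu, hxc⟩ := exists_norm_eq_one_and_eq_norm_smul (x - c)
    refine ⟨c - R • u, by simp [norm_smul, hu, abs_of_nonneg hR], ?_⟩
    rw [show x - (c - R • u) = (‖x - c‖ + R) • u by rw [add_smul, ← hxc]; abel, norm_smul, hu,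
      Real.norm_of_nonneg (by positivity), mul_one, dist_eq_norm]
  · rintro _ ⟨q, hq, rfl⟩
    rw [← dist_eq_norm]
    calc dist x q ≤ dist x c + dist c q := dist_triangle x c q
      _ ≤ dist x c + R := by gcongr; exact mem_closedBall'.1 hq

theorem infDist_closedBall (x c : E) {R : ℝ} (hR : 0 ≤ R) :
    infDist x (closedBall c R) = max (dist x c - R) 0 := by
  rw [infDist, ← cthickening_singleton c hR, infEDist_cthickening, infEDist_singleton,
    edist_dist, ← ENNReal.ofReal_sub _ hR, ENNReal.toReal_ofReal']

theorem dist_midpoint_lt_of_le [StrictConvexSpace ℝ E] {x y c : E} {R : ℝ} (hxy : x ≠ y)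
    (hx : dist x c ≤ R) (hy : dist y c ≤ R) : dist (midpoint ℝ x y) c < R :=
  mem_ball.1 <| openSegment_subset_ball_of_ne (mem_closedBall.2 hx) (mem_closedBall.2 hy) hxy
    (midpoint_mem_openSegment x y)

end Balls

section Objective

variable {E ι κ : Type*} [PseudoMetricSpace E] (a : ι → E) (r : ι → ℝ) (b : κ → E) (s : κ → ℝ)

noncomputable def sylvesterObjective (x : E) : ℝ :=
  ⨆ p : ι ⊕ κ, Sum.elim (fun i => dist x (a i) + r i) (fun j => max (dist x (b j) - s j) 0) p

variable [Finite ι] [Finite κ] {a r b s}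

theorem dist_add_le_sylvesterObjective (x : E) (i : ι) :
    dist x (a i) + r i ≤ sylvesterObjective a r b s x :=
  le_ciSup_of_le (Finite.bddAbove_range _) (.inl i) le_rfl

theorem max_dist_sub_le_sylvesterObjective (x : E) (j : κ) :
    max (dist x (b j) - s j) 0 ≤ sylvesterObjective a r b s x :=
  le_ciSup_of_le (Finite.bddAbove_range _) (.inr j) le_rfl

theorem dist_le_sylvesterObjective_add [Nonempty ι] (hr : ∀ i, 0 ≤ r i) (x y : E) :
    dist x y ≤ sylvesterObjective a r b s x + sylvesterObjective a r b s y := by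
  obtain ⟨i⟩ := ‹Nonempty ι›
  have hx : dist x (a i) + r i ≤ sylvesterObjective a r b s x := dist_add_le_sylvesterObjective x i
  have hy : dist y (a i) + r i ≤ sylvesterObjective a r b s y := dist_add_le_sylvesterObjective y i
  linarith [hr i, dist_triangle_right x y (a i)]

end Objective

section NormedSpace

variable {E ι κ : Type*} [NormedAddCommGroup E] [NormedSpace ℝ E]
  (a : ι → E) (r : ι → ℝ) (b : κ → E) (s : κ → ℝ)

theorem sylvesterObjective_eq_sSup [Nontrivial E] (hr : ∀ i, 0 ≤ r i) (hs : ∀ j, 0 ≤ s j)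
    (x : E) :
    sylvesterObjective a r b s x = sSup (Set.range fun p : ι ⊕ κ =>
      Sum.elim (fun i => sSup {d : ℝ | ∃ q ∈ closedBall (a i) (r i), d = ‖x - q‖})
        (fun j => infDist x (closedBall (b j) (s j))) p) := by
  rw [sylvesterObjective, iSup]
  congr with p
  rcases p with i | j
  · exact (sSup_norm_sub_closedBall x (a i) (hr i)).symm
  · exact (infDist_closedBall x (b j) (hs j)).symm

variable [Finite ι] [Finite κ] {a r b s}

theorem sylvesterObjective_midpoint_lt [StrictConvexSpace ℝ E] {x y : E} {V : ℝ} (hxy : x ≠ y)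
    (hV : 0 < V) (hx : sylvesterObjective a r b s x ≤ V) (hy : sylvesterObjective a r b s y ≤ V) :
    sylvesterObjective a r b s (midpoint ℝ x y) < V := by
  rcases isEmpty_or_nonempty (ι ⊕ κ) with _ | _
  · simpa [sylvesterObjective] using hV
  obtain ⟨p, hp⟩ := exists_eq_ciSup_of_finite (f := fun p : ι ⊕ κ =>
    Sum.elim (fun i => dist (midpoint ℝ x y) (a i) + r i)
      (fun j => max (dist (midpoint ℝ x y) (b j) - s j) 0) p)
  rw [sylvesterObjective, ← hp]
  rcases p with i | j
  · simp only [Sum.elim_inl]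
    have hxi := (dist_add_le_sylvesterObjective x i).trans hx
    have hyi := (dist_add_le_sylvesterObjective y i).trans hy
    linarith [dist_midpoint_lt_of_le (R := V - r i) hxy (by linarith) (by linarith)]
  · simp only [Sum.elim_inr]
    have hxj := (le_max_left _ _).trans ((max_dist_sub_le_sylvesterObjective x j).trans hx)
    have hyj := (le_max_left _ _).trans ((max_dist_sub_le_sylvesterObjective y j).trans hy)
    have hmid := dist_midpoint_lt_of_le (R := V + s j) hxy (by linarith) (by linarith)
    exact max_lt (by linarith) hV

end NormedSpace

/-- If `I ≠ ∅`, the minimizer of the generalized Sylvester objective is unique. -/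
theorem sylvester_unique_minimizer (n m k : ℕ) (hm : 0 < m)
    (a : Fin m → EuclideanSpace ℝ (Fin n)) (r : Fin m → ℝ) (hr : ∀ i, 0 ≤ r i)
    (b : Fin k → EuclideanSpace ℝ (Fin n)) (s : Fin k → ℝ) (hs : ∀ j, 0 ≤ s j)
    (G : EuclideanSpace ℝ (Fin n) → ℝ)
    (hG : ∀ x, G x = sSup (Set.range fun p : Fin m ⊕ Fin k =>
        Sum.elim
          (fun i => sSup {d : ℝ | ∃ q ∈ Metric.closedBall (a i) (r i), d = ‖x - q‖})
          (fun j => Metric.infDist x (Metric.closedBall (b j) (s j))) p))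
    (x₁ x₂ : EuclideanSpace ℝ (Fin n))
    (h₁ : ∀ x, G x₁ ≤ G x) (h₂ : ∀ x, G x₂ ≤ G x) :
    x₁ = x₂ := by
  rcases subsingleton_or_nontrivial (EuclideanSpace ℝ (Fin n)) with _ | _
  · exact Subsingleton.elim x₁ x₂
  obtain rfl : G = sylvesterObjective a r b s :=
    funext fun x => (hG x).trans (sylvesterObjective_eq_sSup a r b s hr hs x).symm
  by_contra hne
  have hV : sylvesterObjective a r b s x₂ = sylvesterObjective a r b s x₁ :=
    le_antisymm (h₂ x₁) (h₁ x₂)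
  have : Nonempty (Fin m) := Fin.pos_iff_nonempty.1 hm
  have hdist : dist x₁ x₂ ≤ sylvesterObjective a r b s x₁ + sylvesterObjective a r b s x₂ :=
    dist_le_sylvesterObjective_add hr x₁ x₂
  have hV_pos : 0 < sylvesterObjective a r b s x₁ := by linarith [dist_pos.2 hne]
  exact (h₁ _).not_gt (sylvesterObjective_midpoint_lt hne hV_pos le_rfl hV.le)
end

section
/- Let Ω_1, Ω_2, Ω_3 be closed balls B(a_i;r_i) in ℝ² with r_i > 0. A point x̄ with active index set A(x̄) = {1} (i.e., M(x̄;Ω_1) > M(x̄;Ω_i) for i = 2,3) is the minimizer of G(x) = max_i M(x;Ω_i) if and only if x̄ = a_1, r_1 = G(x̄), and B(x̄;r_1) strictly contains Ω_2 and Ω_3 (i.e., ‖a_1−a_i‖ + r_i < r_1 for i = 2,3). -/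
/-!
Near `x̄` the inactive distances stay strictly below the active one, so `G` coincides with
`x ↦ ‖x - a₁‖ + r₁` on a neighbourhood of `x̄`. A minimizer of `G` is therefore a local minimizer
of the convex function `x ↦ ‖x - a₁‖`, hence a global one, which forces `x̄ = a₁`. Conversely,
`G x ≥ ‖x - a₁‖ + r₁ ≥ r₁ = G a₁` for every `x`.
-/

open Filter Topology Set

theorem ciSup_eq_of_forall_le {ι : Type*} [Finite ι] {f : ι → ℝ} {i₀ : ι}
    (h : ∀ i, f i ≤ f i₀) : ⨆ i, f i = f i₀ :=
  haveI : Nonempty ι := ⟨i₀⟩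
  le_antisymm (ciSup_le h) (le_ciSup (Finite.bddAbove_range f) i₀)

theorem eventually_iSup_eq_of_forall_lt {ι X : Type*} [Finite ι] [TopologicalSpace X]
    {f : ι → X → ℝ} {i₀ : ι} {x : X} (hf : ∀ i, Continuous (f i))
    (hlt : ∀ i ≠ i₀, f i x < f i₀ x) : ∀ᶠ y in 𝓝 x, ⨆ i, f i y = f i₀ y := by
  have hle : ∀ᶠ y in 𝓝 x, ∀ i, f i y ≤ f i₀ y := by
    refine eventually_all.2 fun i => ?_
    by_cases hi : i = i₀
    · exact Eventually.of_forall fun y => hi ▸ le_rfl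
    · exact ((hf i).continuousAt.eventually_lt (hf i₀).continuousAt (hlt i hi)).mono
        fun _ => le_of_lt
  exact hle.mono fun _ => ciSup_eq_of_forall_le

theorem eq_of_isLocalMin_norm_sub {E : Type*} [NormedAddCommGroup E] [NormedSpace ℝ E]
    {c x : E} (h : IsLocalMin (fun y => ‖y - c‖) x) : x = c := by
  have hconv : ConvexOn ℝ univ fun y : E => ‖y - c‖ := by
    simpa only [dist_eq_norm] using convexOn_univ_dist c
  have := IsMinOn.of_isLocalMin_of_convex_univ h hconv c
  simpa [sub_eq_zero] using this

theorem three_ball_sylvester_active_singleton_general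
    (a : Fin 3 → EuclideanSpace ℝ (Fin 2)) (r : Fin 3 → ℝ)
    (G : EuclideanSpace ℝ (Fin 2) → ℝ)
    (hG : ∀ x, G x = sSup (Set.range fun i : Fin 3 => ‖x - a i‖ + r i))
    (xb : EuclideanSpace ℝ (Fin 2))
    (hactive : ∀ i : Fin 3, i ≠ 0 → ‖xb - a i‖ + r i < ‖xb - a 0‖ + r 0) :
    (∀ x, G xb ≤ G x) ↔
      (xb = a 0 ∧ r 0 = G xb ∧ ∀ i : Fin 3, i ≠ 0 → ‖a 0 - a i‖ + r i < r 0) := by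
  have hG' : ∀ x, G x = ⨆ i, ‖x - a i‖ + r i := hG
  have hGxb : G xb = ‖xb - a 0‖ + r 0 := by
    refine (hG' xb).trans (ciSup_eq_of_forall_le fun i => ?_)
    by_cases hi : i = 0
    · rw [hi]
    · exact (hactive i hi).le
  constructor
  · intro hmin
    have hxb : xb = a 0 := by
      refine eq_of_isLocalMin_norm_sub ?_
      filter_upwards [eventually_iSup_eq_of_forall_lt (f := fun i y => ‖y - a i‖ + r i)
        (fun i => by fun_prop) hactive] with x hx
      have := hmin x
      rw [hG' x, hx, hGxb] at this
      linarith
    subst hxb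
    exact ⟨rfl, by simpa using hGxb.symm, fun i hi => by simpa using hactive i hi⟩
  · rintro ⟨rfl, hr0, -⟩ x
    calc G (a 0) = r 0 := hr0.symm
      _ ≤ ‖x - a 0‖ + r 0 := le_add_of_nonneg_left (norm_nonneg _)
      _ ≤ G x := by
        rw [hG' x]
        exact le_ciSup (f := fun i => ‖x - a i‖ + r i) (Finite.bddAbove_range _) 0

/-- Characterization of the minimizer of the smallest enclosing ball problem for three balls
in the plane when the active index set is a singleton. -/
theorem three_ball_sylvester_active_singleton
    (a : Fin 3 → EuclideanSpace ℝ (Fin 2)) (r : Fin 3 → ℝ) (hr : ∀ i, 0 < r i)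
    (G : EuclideanSpace ℝ (Fin 2) → ℝ)
    (hG : ∀ x, G x = sSup (Set.range fun i : Fin 3 => ‖x - a i‖ + r i))
    (xb : EuclideanSpace ℝ (Fin 2))
    (hactive : ∀ i : Fin 3, i ≠ 0 → ‖xb - a i‖ + r i < ‖xb - a 0‖ + r 0) :
    (∀ x, G xb ≤ G x) ↔
      (xb = a 0 ∧ r 0 = G xb ∧ ∀ i : Fin 3, i ≠ 0 → ‖a 0 - a i‖ + r i < r 0) :=
  three_ball_sylvester_active_singleton_general a r G hG xb hactive
end

section
/- Suppose x* minimizes H(x) = Σ_{i=1}^3 D(x;Θ_i) over ℝ² and x* lies in none of the balls Θ_1, Θ_2, Θ_3. Then x* is the unique minimizer of the classical Fermat–Torricelli function F(x) = Σ_{i=1}^3 ‖x−b_i‖, where b_i are the centers; conversely, if the Fermat–Torricelli point of b_1,b_2,b_3 lies outside all three balls and minimizes H, the two problems have the same minimizer. -/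
/-!
Outside the three balls `H = F - ∑ sᵢ`, and being outside the balls is an open condition, so a
minimizer of `H` lying outside them is a local, hence (by convexity) global, minimizer of `F`.
Minimizers of `F` are unique for any odd number of points in a strictly convex space: for two
minimizers `x ≠ y`, minimality of the midpoint puts `x - bᵢ` and `y - bᵢ` on a common ray, so each
`‖x - bᵢ‖ - ‖y - bᵢ‖` is `±‖x - y‖`, and an odd number of such terms cannot sum to `F x - F y = 0`.
For the converse, the minimizers of the convex function `H` form a convex set in which `z` is
isolated, hence reduce to `{z}`.
-/

open Metric Set Filter Topology

section InfDistBall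

variable {E : Type*} [SeminormedAddCommGroup E] [NormedSpace ℝ E]

theorem Metric.infDist_closedBall_eq_max {x c : E} {s : ℝ} (hs : 0 ≤ s) :
    infDist x (closedBall c s) = max (dist x c - s) 0 := by
  rcases le_or_gt (dist x c) s with hx | hx
  · rw [infDist_zero_of_mem (mem_closedBall.2 hx), max_eq_right (by linarith)]
  have hd : 0 < dist x c := hs.trans_lt hx
  rw [max_eq_left (by linarith)]
  refine le_antisymm ?_ ((le_infDist ⟨c, mem_closedBall_self hs⟩).2 fun y hy => ?_)
  · set y := AffineMap.lineMap c x (s / dist x c)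
    have hy : y ∈ closedBall c s := by
      rw [mem_closedBall, dist_lineMap_left, Real.norm_of_nonneg (by positivity), dist_comm c x,
        div_mul_cancel₀ _ hd.ne']
    calc infDist x (closedBall c s) ≤ dist x y := infDist_le_dist_of_mem hy
      _ = dist x c - s := by
        rw [dist_comm, dist_lineMap_right, Real.norm_of_nonneg (by
          rw [sub_nonneg, div_le_one hd]; exact hx.le), dist_comm c x, sub_mul,
          div_mul_cancel₀ _ hd.ne', one_mul]
  · linarith [dist_triangle x y c, mem_closedBall.1 hy]

theorem convexOn_infDist_closedBall (c : E) {s : ℝ} (hs : 0 ≤ s) :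
    ConvexOn ℝ univ fun x => infDist x (closedBall c s) := by
  simp_rw [infDist_closedBall_eq_max hs, sub_eq_add_neg]
  exact ((convexOn_univ_dist c).add_const _).sup (convexOn_const 0 convex_univ)

end InfDistBall

theorem ConvexOn.sum {𝕜 E β ι : Type*} [Semiring 𝕜] [PartialOrder 𝕜] [IsOrderedRing 𝕜]
    [AddCommMonoid E] [Module 𝕜 E] [AddCommMonoid β] [PartialOrder β] [IsOrderedAddMonoid β]
    [Module 𝕜 β] {s : Set E} (t : Finset ι) {f : ι → E → β}
    (hs : Convex 𝕜 s) (hf : ∀ i ∈ t, ConvexOn 𝕜 s (f i)) :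
    ConvexOn 𝕜 s fun x => ∑ i ∈ t, f i x := by
  classical
  induction t using Finset.induction_on with
  | empty => simpa using convexOn_const 0 hs
  | insert i t hi ih =>
    simp_rw [Finset.sum_insert hi]
    exact (hf i (t.mem_insert_self i)).add (ih fun j hj => hf j (Finset.mem_insert_of_mem hj))

theorem ConvexOn.convex_setOf_isMinOn {E β : Type*} [AddCommMonoid E] [Module ℝ E]
    [AddCommMonoid β] [PartialOrder β] [Module ℝ β] [IsOrderedAddMonoid β] [PosSMulMono ℝ β]
    {f : E → β} (hf : ConvexOn ℝ univ f) : Convex ℝ {x | IsMinOn f univ x} := by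
  rintro x hx
  have : {x | IsMinOn f univ x} = {y ∈ univ | f y ≤ f x} :=
    Set.ext fun y => ⟨fun hy => ⟨mem_univ y, hy (mem_univ x)⟩,
      fun hy z _ => hy.2.trans (hx (mem_univ z))⟩
  rw [this]
  exact hf.convex_le _ ⟨mem_univ x, le_rfl⟩

theorem Convex.subset_singleton_of_inter_subset {E : Type*} [AddCommGroup E] [Module ℝ E]
    [TopologicalSpace E] [IsTopologicalAddGroup E] [ContinuousSMul ℝ E] {S U : Set E} {z : E}
    (hS : Convex ℝ S) (hz : z ∈ S) (hU : U ∈ 𝓝 z) (hSU : S ∩ U ⊆ {z}) : S ⊆ {z} := by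
  intro x hx
  have hcont : Tendsto (fun t : ℝ => z + t • (x - z)) (𝓝[>] 0) (𝓝 z) := by
    have : Continuous fun t : ℝ => z + t • (x - z) := by fun_prop
    simpa using (this.tendsto 0).mono_left nhdsWithin_le_nhds
  obtain ⟨t, htU, ht0, ht1⟩ :=
    ((hcont.eventually hU).and (Ioo_mem_nhdsGT zero_lt_one)).exists
  have hzt : z + t • (x - z) = z :=
    hSU ⟨hS.add_smul_sub_mem hz hx ⟨ht0.le, ht1.le⟩, htU⟩
  simpa [ht0.ne', sub_eq_zero] using hzt

theorem eq_zero_of_sum_eq_zero_of_forall_abs_eq {ι : Type*} [Fintype ι]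
    (hodd : Odd (Fintype.card ι)) {r : ι → ℝ} {d : ℝ} (hr : ∀ i, |r i| = d)
    (hsum : ∑ i, r i = 0) : d = 0 := by
  classical
  -- each `r i` is `(2 k - 1) d` with `k ∈ {0, 1}`, and `2 ∑ k - card ι` is odd
  set k : ι → ℤ := fun i => if 0 ≤ r i then 1 else 0
  have hrk : ∀ i, r i = (2 * k i - 1 : ℤ) * d := by
    intro i
    rw [← hr i]
    by_cases h : 0 ≤ r i
    · simp [k, h, abs_of_nonneg h]
    · simp [k, h, abs_of_neg (not_le.1 h)]
  have hne : (2 * ∑ i, k i - Fintype.card ι : ℤ) ≠ 0 := by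
    obtain ⟨m, hm⟩ := hodd
    omega
  have : ((2 * ∑ i, k i - Fintype.card ι : ℤ) : ℝ) * d = 0 := by
    rw [← hsum, Finset.sum_congr rfl fun i _ => hrk i, ← Finset.sum_mul]
    push_cast [Finset.mul_sum, Finset.sum_sub_distrib]
    simp
  exact (mul_eq_zero.1 this).resolve_left (by exact_mod_cast hne)

section FermatTorricelli

variable {E ι : Type*} [Fintype ι]

def fermatTorricelli [SeminormedAddCommGroup E] (b : ι → E) (x : E) : ℝ :=
  ∑ i, ‖x - b i‖

noncomputable def ballFermatTorricelli [PseudoMetricSpace E] (b : ι → E) (s : ι → ℝ) (x : E) :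
    ℝ :=
  ∑ i, infDist x (closedBall (b i) (s i))

theorem eventually_forall_notMem_closedBall [PseudoMetricSpace E] {b : ι → E} {s : ι → ℝ}
    {x : E} (hx : ∀ i, x ∉ closedBall (b i) (s i)) :
    ∀ᶠ y in 𝓝 x, ∀ i, y ∉ closedBall (b i) (s i) :=
  eventually_all.2 fun i => isClosed_closedBall.isOpen_compl.mem_nhds (hx i)

section Normed

variable [SeminormedAddCommGroup E] [NormedSpace ℝ E] {b : ι → E} {s : ι → ℝ} {x : E}

theorem convexOn_fermatTorricelli (b : ι → E) : ConvexOn ℝ univ (fermatTorricelli b) :=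
  ConvexOn.sum _ convex_univ fun i _ => by simpa only [dist_eq_norm] using convexOn_univ_dist (b i)

theorem convexOn_ballFermatTorricelli (b : ι → E) (hs : ∀ i, 0 ≤ s i) :
    ConvexOn ℝ univ (ballFermatTorricelli b s) :=
  ConvexOn.sum _ convex_univ fun i _ => convexOn_infDist_closedBall (b i) (hs i)

theorem ballFermatTorricelli_eq_sub (hs : ∀ i, 0 ≤ s i)
    (hx : ∀ i, x ∉ closedBall (b i) (s i)) :
    ballFermatTorricelli b s x = fermatTorricelli b x - ∑ i, s i := by
  rw [ballFermatTorricelli, fermatTorricelli, ← Finset.sum_sub_distrib]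
  refine Finset.sum_congr rfl fun i _ => ?_
  have hxi : s i < dist x (b i) := not_le.1 (hx i)
  rw [infDist_closedBall_eq_max (hs i), max_eq_left (by linarith), dist_eq_norm]

theorem isMinOn_fermatTorricelli_of_isMinOn_ballFermatTorricelli (hs : ∀ i, 0 ≤ s i)
    (hmin : IsMinOn (ballFermatTorricelli b s) univ x) (hx : ∀ i, x ∉ closedBall (b i) (s i)) :
    IsMinOn (fermatTorricelli b) univ x := by
  refine IsMinOn.of_isLocalMinOn_of_convexOn (mem_univ x) ?_ (convexOn_fermatTorricelli b)
  filter_upwards [nhdsWithin_le_nhds (eventually_forall_notMem_closedBall hx)] with y hy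
  have := isMinOn_univ_iff.1 hmin y
  rw [ballFermatTorricelli_eq_sub hs hx, ballFermatTorricelli_eq_sub hs hy] at this
  linarith

end Normed

section StrictConvex

variable [NormedAddCommGroup E] [NormedSpace ℝ E] [StrictConvexSpace ℝ E] {b : ι → E} {x y : E}

theorem sameRay_sub_of_isMinOn_fermatTorricelli (hx : IsMinOn (fermatTorricelli b) univ x)
    (hy : IsMinOn (fermatTorricelli b) univ y) (i : ι) :
    SameRay ℝ (x - b i) (y - b i) := by
  by_contra hi
  set m : E := (2 : ℝ)⁻¹ • (x + y)
  have hm : ∀ j, 2 * ‖m - b j‖ = ‖(x - b j) + (y - b j)‖ := fun j => by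
    rw [show m - b j = (2 : ℝ)⁻¹ • ((x - b j) + (y - b j)) by module, norm_smul]
    norm_num
    ring
  have hlt : 2 * fermatTorricelli b m < fermatTorricelli b x + fermatTorricelli b y := by
    simp only [fermatTorricelli, Finset.mul_sum, ← Finset.sum_add_distrib]
    exact Finset.sum_lt_sum (fun j _ => (hm j).trans_le (norm_add_le _ _))
      ⟨i, Finset.mem_univ _, (hm i).trans_lt (norm_add_lt_of_not_sameRay hi)⟩
  linarith [isMinOn_univ_iff.1 hx m, isMinOn_univ_iff.1 hy m]

theorem eq_of_isMinOn_fermatTorricelli (hodd : Odd (Fintype.card ι))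
    (hx : IsMinOn (fermatTorricelli b) univ x) (hy : IsMinOn (fermatTorricelli b) univ y) :
    x = y := by
  have hr : ∀ i, |‖x - b i‖ - ‖y - b i‖| = ‖x - y‖ := fun i => by
    rw [← (sameRay_sub_of_isMinOn_fermatTorricelli hx hy i).norm_sub, sub_sub_sub_cancel_right]
  have hsum : ∑ i, (‖x - b i‖ - ‖y - b i‖) = 0 := by
    rw [Finset.sum_sub_distrib, sub_eq_zero]
    exact le_antisymm (isMinOn_univ_iff.1 hx y) (isMinOn_univ_iff.1 hy x)
  exact sub_eq_zero.1 (norm_eq_zero.1 (eq_zero_of_sum_eq_zero_of_forall_abs_eq hodd hr hsum))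

end StrictConvex

end FermatTorricelli

theorem fermat_torricelli_outside_balls_general
    (b : Fin 3 → EuclideanSpace ℝ (Fin 2)) (s : Fin 3 → ℝ) (hs : ∀ i, 0 ≤ s i)
    (H F : EuclideanSpace ℝ (Fin 2) → ℝ)
    (hH : ∀ x, H x = ∑ i : Fin 3, Metric.infDist x (Metric.closedBall (b i) (s i)))
    (hF : ∀ x, F x = ∑ i : Fin 3, ‖x - b i‖) :
    (∀ xs : EuclideanSpace ℝ (Fin 2), (∀ x, H xs ≤ H x) →
        (∀ i, xs ∉ Metric.closedBall (b i) (s i)) →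
        (∀ x, F xs ≤ F x) ∧ (∀ y, (∀ x, F y ≤ F x) → y = xs)) ∧
    (∀ z : EuclideanSpace ℝ (Fin 2), (∀ x, F z ≤ F x) →
        (∀ i, z ∉ Metric.closedBall (b i) (s i)) → (∀ x, H z ≤ H x) →
        {x | ∀ y, H x ≤ H y} = {x | ∀ y, F x ≤ F y}) := by
  simp only [← isMinOn_univ_iff]
  obtain rfl : H = ballFermatTorricelli b s := funext hH
  obtain rfl : F = fermatTorricelli b := funext hF
  have outside : ∀ xs, IsMinOn (ballFermatTorricelli b s) univ xs →
      (∀ i, xs ∉ closedBall (b i) (s i)) → IsMinOn (fermatTorricelli b) univ xs ∧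
        ∀ y, IsMinOn (fermatTorricelli b) univ y → y = xs := fun xs hH hout =>
    have hF := isMinOn_fermatTorricelli_of_isMinOn_ballFermatTorricelli hs hH hout
    ⟨hF, fun y hy => eq_of_isMinOn_fermatTorricelli (by decide) hy hF⟩
  refine ⟨outside, fun z hzF hzout hzH => ?_⟩
  have hHmin : {x | IsMinOn (ballFermatTorricelli b s) univ x} ⊆ {z} :=
    (convexOn_ballFermatTorricelli b hs).convex_setOf_isMinOn.subset_singleton_of_inter_subset
      hzH (eventually_forall_notMem_closedBall hzout)
      fun x ⟨hxH, hxout⟩ => ((outside x hxH hxout).2 z hzF).symm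
  ext x
  exact ⟨fun hx => (hHmin hx).symm ▸ hzF, fun hx => (outside z hzH hzout).2 x hx ▸ hzH⟩

/-- A minimizer of the generalized Fermat–Torricelli objective lying outside all three
balls is the unique classical Fermat–Torricelli point of the centers; conversely, if the
Fermat–Torricelli point of the centers lies outside all balls and minimizes `H`, the two
problems have the same minimizers. -/
theorem fermat_torricelli_outside_balls
    (b : Fin 3 → EuclideanSpace ℝ (Fin 2)) (s : Fin 3 → ℝ) (hs : ∀ i, 0 ≤ s i)
    (hb : Function.Injective b)
    (H F : EuclideanSpace ℝ (Fin 2) → ℝ)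
    (hH : ∀ x, H x = ∑ i : Fin 3, Metric.infDist x (Metric.closedBall (b i) (s i)))
    (hF : ∀ x, F x = ∑ i : Fin 3, ‖x - b i‖) :
    (∀ xs : EuclideanSpace ℝ (Fin 2), (∀ x, H xs ≤ H x) →
        (∀ i, xs ∉ Metric.closedBall (b i) (s i)) →
        (∀ x, F xs ≤ F x) ∧ (∀ y, (∀ x, F y ≤ F x) → y = xs)) ∧
    (∀ z : EuclideanSpace ℝ (Fin 2), (∀ x, F z ≤ F x) →
        (∀ i, z ∉ Metric.closedBall (b i) (s i)) → (∀ x, H z ≤ H x) →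
        {x | ∀ y, H x ≤ H y} = {x | ∀ y, F x ≤ F y}) :=
  fermat_torricelli_outside_balls_general b s hs H F hH hF
end

section
/- Let x* minimize H(x) = Σ_{i=1}^3 D(x;Θ_i) over ℝ², and suppose x* ∈ Θ_1 ∩ Θ_2 but x* ∉ Θ_3. Then x* lies on the boundary of Θ_1 ∩ Θ_2 (it cannot belong to the interior of Θ_1 ∩ Θ_2). -/
/-!
On `Θ₁ ∩ Θ₂` the objective `H` reduces to the distance to `Θ₃`, and the distance to a closed set
has no local minimum outside that set. So a minimizer off `Θ₃` cannot be interior to `Θ₁ ∩ Θ₂`.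
-/

open Metric Filter Topology

/-- Moving a little from `x` towards a nearest point of `K` strictly decreases the distance. -/
theorem IsClosed.exists_infDist_lt_of_notMem {E : Type*} [NormedAddCommGroup E]
    [NormedSpace ℝ E] [ProperSpace E] {K : Set E} (hK : IsClosed K) (hne : K.Nonempty)
    {x : E} (hx : x ∉ K) {U : Set E} (hU : U ∈ 𝓝 x) :
    ∃ y ∈ U, infDist y K < infDist x K := by
  obtain ⟨q, hqK, hq⟩ := hK.exists_infDist_eq_dist hne x
  have hpos : 0 < dist x q := hq ▸ (hK.notMem_iff_infDist_pos hne).1 hx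
  have hnear : ∀ᶠ t in 𝓝[>] (0 : ℝ), AffineMap.lineMap x q t ∈ U :=
    (AffineMap.lineMap_continuous.tendsto' 0 x (AffineMap.lineMap_apply_zero _ _)).mono_left
      nhdsWithin_le_nhds hU
  have hsmall : ∀ᶠ t in 𝓝[>] (0 : ℝ), t < 1 :=
    nhdsWithin_le_nhds (Iio_mem_nhds one_pos)
  obtain ⟨t, ⟨(ht0 : 0 < t), ht1⟩, hyU⟩ :=
    ((eventually_mem_nhdsWithin (s := Set.Ioi 0)).and hsmall |>.and hnear).exists
  refine ⟨AffineMap.lineMap x q t, hyU, ?_⟩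
  calc infDist (AffineMap.lineMap x q t) K ≤ dist (AffineMap.lineMap x q t) q :=
        infDist_le_dist_of_mem hqK
    _ = (1 - t) * dist x q := by
        rw [dist_lineMap_right, Real.norm_of_nonneg (by linarith)]
    _ < dist x q := by nlinarith
    _ = infDist x K := hq.symm

theorem fermat_torricelli_boundary_of_two_general
    (b : Fin 3 → EuclideanSpace ℝ (Fin 2)) (s : Fin 3 → ℝ) (hs : ∀ i, 0 ≤ s i)
    (H : EuclideanSpace ℝ (Fin 2) → ℝ)
    (hH : ∀ x, H x = ∑ i : Fin 3, Metric.infDist x (Metric.closedBall (b i) (s i)))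
    (xs : EuclideanSpace ℝ (Fin 2)) (hmin : ∀ x, H xs ≤ H x)
    (h1 : xs ∈ Metric.closedBall (b 0) (s 0)) (h2 : xs ∈ Metric.closedBall (b 1) (s 1))
    (h3 : xs ∉ Metric.closedBall (b 2) (s 2)) :
    xs ∈ frontier (Metric.closedBall (b 0) (s 0) ∩ Metric.closedBall (b 1) (s 1)) := by
  have hH_inter : ∀ x ∈ closedBall (b 0) (s 0) ∩ closedBall (b 1) (s 1),
      H x = infDist x (closedBall (b 2) (s 2)) := fun x hx => by
    rw [hH, Fin.sum_univ_three, infDist_zero_of_mem hx.1, infDist_zero_of_mem hx.2,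
      zero_add, zero_add]
  rw [frontier, (isClosed_closedBall.inter isClosed_closedBall).closure_eq]
  refine ⟨⟨h1, h2⟩, fun hint => ?_⟩
  obtain ⟨y, hy, hlt⟩ := isClosed_closedBall.exists_infDist_lt_of_notMem
    (nonempty_closedBall.2 (hs 2)) h3 (isOpen_interior.mem_nhds hint)
  have hle := hmin y
  rw [hH_inter xs ⟨h1, h2⟩, hH_inter y (interior_subset hy)] at hle
  exact hle.not_gt hlt

/-- A minimizer lying in `Θ₁ ∩ Θ₂` but not in `Θ₃` must be on the boundary of `Θ₁ ∩ Θ₂`. -/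
theorem fermat_torricelli_boundary_of_two
    (b : Fin 3 → EuclideanSpace ℝ (Fin 2)) (s : Fin 3 → ℝ) (hs : ∀ i, 0 ≤ s i)
    (hb : Function.Injective b)
    (H : EuclideanSpace ℝ (Fin 2) → ℝ)
    (hH : ∀ x, H x = ∑ i : Fin 3, Metric.infDist x (Metric.closedBall (b i) (s i)))
    (xs : EuclideanSpace ℝ (Fin 2)) (hmin : ∀ x, H xs ≤ H x)
    (h1 : xs ∈ Metric.closedBall (b 0) (s 0)) (h2 : xs ∈ Metric.closedBall (b 1) (s 1))
    (h3 : xs ∉ Metric.closedBall (b 2) (s 2)) :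
    xs ∈ frontier (Metric.closedBall (b 0) (s 0) ∩ Metric.closedBall (b 1) (s 1)) :=
  fermat_torricelli_boundary_of_two_general b s hs H hH xs hmin h1 h2 h3
end
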